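/- arXiv:1911.04097 — 2 statements merged into one kernel-verified Lean document; each statement's English description precedes it below -/
import Mathlib

section
/- On ℂP^n with the Fubini–Study metric normalized so that Ric = ((n+1)/2)g, for every traceless Hermitian matrix w ∈ ℂ^{(n+1)×(n+1)} with w = w*, tr w = 0, the function f_w([z]) = Σ_{i,j} w_{ij} z_i \bar{z}_j / |z|² satisfies Δ f_w = −(n+1) f_w, i.e., f_w is an eigenfunction of the Laplace–Beltrami operator corresponding to the first non-zero eigenvalue n+1. -/
open MeasureTheory
open scoped RealInnerProductSpace

noncomputable section

/-! Basic spherical calculus on the unit sphere `S = {‖x‖ = 1} ⊂ ℝ^ι`, done via ambient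
(0-homogeneous) extensions.  The tangential gradient, divergence and the induced
Laplace–Beltrami operator are the standard ones of the round metric. -/

variable {ι : Type*} [Fintype ι] [DecidableEq ι]

/-- The unit sphere, as a subset of Euclidean space. -/
def Sph (ι : Type*) [Fintype ι] : Set (EuclideanSpace ℝ ι) := {x | ‖x‖ = 1}

/-- Tangential (spherical) gradient of an ambient real-valued function: the orthogonal
projection of the ambient gradient onto the tangent space of the sphere.  At points of the
sphere it depends only on the restriction of `f` to the sphere. -/
def gradS (f : EuclideanSpace ℝ ι → ℝ) (x : EuclideanSpace ℝ ι) : EuclideanSpace ℝ ι :=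
  _root_.gradient f x - ⟪_root_.gradient f x, x⟫ • x

/-- Spherical divergence (at unit vectors `x`) of an ambient vector field which is tangent
along the sphere: the trace of the ambient derivative over the tangent space `x^⊥`. -/
def divS (Y : EuclideanSpace ℝ ι → EuclideanSpace ℝ ι) (x : EuclideanSpace ℝ ι) : ℝ :=
  (∑ i, ⟪fderiv ℝ Y x (EuclideanSpace.single i (1 : ℝ)), EuclideanSpace.single i (1 : ℝ)⟫)
    - ⟪fderiv ℝ Y x x, x⟫

def uRe (u : EuclideanSpace ℝ ι → ℂ) : EuclideanSpace ℝ ι → ℝ := fun x => (u x).re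
def uIm (u : EuclideanSpace ℝ ι → ℂ) : EuclideanSpace ℝ ι → ℝ := fun x => (u x).im

/-- Laplace–Beltrami operator of the round sphere, computed on a 0-homogeneous ambient
extension as the spherical divergence of the spherical gradient. -/
def lapS (f : EuclideanSpace ℝ ι → ℝ) (x : EuclideanSpace ℝ ι) : ℝ := divS (gradS f) x

/-- Componentwise sphere Laplacian of a ℂ-valued function. -/
def lapSC (u : EuclideanSpace ℝ ι → ℂ) (x : EuclideanSpace ℝ ι) : ℂ :=
  (lapS (uRe u) x : ℂ) + (lapS (uIm u) x : ℂ) * Complex.I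

/-- `u` is the canonical (0-homogeneous) ambient extension of a smooth function on the
sphere: smooth away from the origin and invariant under positive dilations. -/
def SphFun (u : EuclideanSpace ℝ ι → ℂ) : Prop :=
  ContDiffOn ℝ (⊤ : ℕ∞) u {x | x ≠ 0} ∧ ∀ c : ℝ, 0 < c → ∀ x : EuclideanSpace ℝ ι, x ≠ 0 → u (c • x) = u x

/-- `|∇u|²`, the squared norm of the spherical gradient of a ℂ-valued function. -/
def gradSq (u : EuclideanSpace ℝ ι → ℂ) (x : EuclideanSpace ℝ ι) : ℝ :=
  ‖gradS (uRe u) x‖ ^ 2 + ‖gradS (uIm u) x‖ ^ 2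

/-- Ginzburg–Landau energy density `e_ε(u)`. -/
def eGL (ε : ℝ) (u : EuclideanSpace ℝ ι → ℂ) (x : EuclideanSpace ℝ ι) : ℝ :=
  gradSq u x / 2 + (1 - ‖u x‖ ^ 2) ^ 2 / (4 * ε ^ 2)

/-- Ginzburg–Landau energy `E_ε` on the sphere of dimension `d`, with respect to the
`d`-dimensional Hausdorff measure (the Riemannian volume of the round metric). -/
def EGL (d : ℝ) (ε : ℝ) (u : EuclideanSpace ℝ ι → ℂ) : ℝ :=
  ∫ x in Sph ι, eGL ε u x ∂(Measure.hausdorffMeasure d)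

/-- Real inner product of two complex numbers (`ℂ ≅ ℝ²`). -/
def cdot (a b : ℂ) : ℝ := a.re * b.re + a.im * b.im

/-- `u` solves the Ginzburg–Landau equation `ε²Δu = (|u|²-1)u` on the sphere. -/
def IsGLSolution (ε : ℝ) (u : EuclideanSpace ℝ ι → ℂ) : Prop :=
  SphFun u ∧ ∀ x ∈ Sph ι, (ε ^ 2 : ℂ) * lapSC u x = ((‖u x‖ ^ 2 - 1 : ℝ) : ℂ) * u x

/-- Second (outer) variation `δ²E_ε(u)(v,v)` on the sphere of dimension `d`. -/
def d2E (d : ℝ) (ε : ℝ) (u v : EuclideanSpace ℝ ι → ℂ) : ℝ :=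
  ∫ x in Sph ι,
    (gradSq v x + (‖u x‖ ^ 2 - 1) / ε ^ 2 * ‖v x‖ ^ 2 + 2 / ε ^ 2 * cdot (u x) (v x) ^ 2)
    ∂(Measure.hausdorffMeasure d)

/-- Stability: the second outer variation is nonnegative (smooth variations, which are
dense in `W^{1,2}`). -/
def IsStable (d : ℝ) (ε : ℝ) (u : EuclideanSpace ℝ ι → ℂ) : Prop :=
  ∀ v : EuclideanSpace ℝ ι → ℂ, ContDiff ℝ (⊤ : ℕ∞) v → 0 ≤ d2E d ε u v

/-- `φ` is the flow of the smooth vector field `X`, which is tangent to the unit sphere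
(hence the flow preserves the sphere). -/
def IsSphereFlow (X : EuclideanSpace ℝ ι → EuclideanSpace ℝ ι)
    (φ : ℝ → EuclideanSpace ℝ ι → EuclideanSpace ℝ ι) : Prop :=
  ContDiff ℝ (⊤ : ℕ∞) X ∧ (∀ x ∈ Sph ι, ⟪X x, x⟫ = 0) ∧ φ 0 = id ∧
    (∀ t x, HasDerivAt (fun s => φ s x) (X (φ t x)) t) ∧
    (ContDiff ℝ (⊤ : ℕ∞) fun p : ℝ × EuclideanSpace ℝ ι => φ p.1 p.2) ∧
    (∀ t, ∀ x ∈ Sph ι, φ t x ∈ Sph ι)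


/-- The complex coordinates of a point of `ℝ^{2(n+1)} ≅ ℂ^{n+1}`. -/
def zc {n : ℕ} (x : EuclideanSpace ℝ (Fin (n + 1) × Fin 2)) (i : Fin (n + 1)) : ℂ :=
  (x (i, 0) : ℂ) + (x (i, 1) : ℂ) * Complex.I

/-- The (0-homogeneous ambient extension of the) lift to `S^{2n+1} ⊂ ℂ^{n+1}` of the first
eigenfunction `f_w([z]) = Σ_{i,j} w_{ij} z_i \bar z_j / |z|²` of `ℂPⁿ`. -/
def fw {n : ℕ} (w : Matrix (Fin (n + 1)) (Fin (n + 1)) ℂ)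
    (x : EuclideanSpace ℝ (Fin (n + 1) × Fin 2)) : ℝ :=
  (∑ i, ∑ j, w i j * zc x i * (starRingEnd ℂ) (zc x j)).re / ‖x‖ ^ 2

/-- The Laplace–Beltrami operator of `(ℂPⁿ, g_FS)` on a `U(1)`-invariant function,
computed through its lift: the Hopf map `(S^{2n+1}, g₀) → (ℂPⁿ, ¼ g_FS)` is a Riemannian
submersion with minimal fibers, so `Δ_{¼g_FS} f ∘ π = Δ_{S^{2n+1}}(f ∘ π)`, and
`Δ_{g_FS} = ¼ Δ_{¼ g_FS}`. -/
def lapFS {n : ℕ} (F : EuclideanSpace ℝ (Fin (n + 1) × Fin 2) → ℝ)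
    (x : EuclideanSpace ℝ (Fin (n + 1) × Fin 2)) : ℝ :=
  (1 / 4) * lapS F x

set_option linter.unusedSectionVars false

@[simp] lemma eproj_apply (a : ι) (v : EuclideanSpace ℝ ι) :
    (EuclideanSpace.proj a : EuclideanSpace ℝ ι →L[ℝ] ℝ) v = v a := rfl

def qf (A : ι → ι → ℝ) (y : EuclideanSpace ℝ ι) : ℝ := ∑ a, ∑ b, A a b * y a * y b

def Lv (A : ι → ι → ℝ) (y : EuclideanSpace ℝ ι) : EuclideanSpace ℝ ι := WithLp.toLp 2 fun a => ∑ b, A a b * y b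

lemma inner_Lv (A : ι → ι → ℝ) (y v : EuclideanSpace ℝ ι) :
    ⟪Lv A y, v⟫ = ∑ a, (∑ b, A a b * y b) * v a := by
  simp [PiLp.inner_apply, Lv, mul_comm]

lemma inner_Lv_self (A : ι → ι → ℝ) (y : EuclideanSpace ℝ ι) :
    ⟪Lv A y, y⟫ = qf A y := by
  rw [inner_Lv, qf]
  exact Finset.sum_congr rfl fun a _ => by rw [Finset.sum_mul]; exact Finset.sum_congr rfl fun b _ => by ring

lemma hasFDerivAt_qf (A : ι → ι → ℝ) (hsym : ∀ a b, A a b = A b a) (y : EuclideanSpace ℝ ι) :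
    HasFDerivAt (qf A) ((2:ℝ) • (innerSL ℝ (Lv A y))) y := by
  have h : HasFDerivAt (qf A)
      (∑ a : ι, ∑ b : ι, (A a b) •
        (y a • (EuclideanSpace.proj b : EuclideanSpace ℝ ι →L[ℝ] ℝ)
          + y b • (EuclideanSpace.proj a : EuclideanSpace ℝ ι →L[ℝ] ℝ))) y := by
    apply HasFDerivAt.fun_sum
    intro a _
    apply HasFDerivAt.fun_sum
    intro b _
    have ha : HasFDerivAt (fun x : EuclideanSpace ℝ ι => x a)
        (EuclideanSpace.proj a : EuclideanSpace ℝ ι →L[ℝ] ℝ) y :=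
      (EuclideanSpace.proj (𝕜:=ℝ) (i:=a)).hasFDerivAt
    have hb : HasFDerivAt (fun x : EuclideanSpace ℝ ι => x b)
        (EuclideanSpace.proj b : EuclideanSpace ℝ ι →L[ℝ] ℝ) y :=
      (EuclideanSpace.proj (𝕜:=ℝ) (i:=b)).hasFDerivAt
    have hm := (ha.mul hb).const_mul (A a b)
    convert hm using 2 with x
    all_goals first | (simp only [Pi.mul_apply]; ring) | ring | (ext v; simp [smul_smul]) | simp [smul_smul]
  refine h.congr_fderiv ?_; symm
  ext v
  simp only [ContinuousLinearMap.smul_apply, innerSL_apply_apply, ContinuousLinearMap.sum_apply,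
    ContinuousLinearMap.add_apply, eproj_apply, smul_eq_mul]
  rw [inner_Lv]
  have swap : ∑ a, ∑ b, A a b * (y b * v a) = ∑ a, ∑ b, A a b * (y a * v b) := by
    rw [Finset.sum_comm]
    exact Finset.sum_congr rfl fun a _ => Finset.sum_congr rfl fun b _ => by rw [hsym b a]
  calc 2 * ∑ a, (∑ b, A a b * y b) * v a
      = ∑ a, ∑ b, (A a b * (y b * v a) + A a b * (y b * v a)) := by
        rw [Finset.mul_sum]
        refine Finset.sum_congr rfl fun a _ => ?_
        rw [Finset.sum_mul, Finset.mul_sum]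
        exact Finset.sum_congr rfl fun b _ => by ring
    _ = (∑ a, ∑ b, A a b * (y b * v a)) + ∑ a, ∑ b, A a b * (y b * v a) := by
        rw [← Finset.sum_add_distrib]
        exact Finset.sum_congr rfl fun a _ => Finset.sum_add_distrib
    _ = (∑ a, ∑ b, A a b * (y a * v b)) + ∑ a, ∑ b, A a b * (y b * v a) := by rw [swap]
    _ = ∑ a, ∑ b, (A a b * (y a * v b) + A a b * (y b * v a)) := by
        rw [← Finset.sum_add_distrib]
        exact Finset.sum_congr rfl fun a _ => Finset.sum_add_distrib.symm
    _ = ∑ a, ∑ b, A a b * (y a * v b + y b * v a) :=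
        Finset.sum_congr rfl fun a _ => Finset.sum_congr rfl fun b _ => by ring

lemma hasFDerivAt_normsq (y : EuclideanSpace ℝ ι) :
    HasFDerivAt (fun x : EuclideanSpace ℝ ι => ‖x‖ ^ 2) ((2:ℝ) • (innerSL ℝ y)) y := by
  have h := (hasFDerivAt_id y).inner ℝ (hasFDerivAt_id y)
  have h2 : (fun x : EuclideanSpace ℝ ι => ‖x‖ ^ 2) = fun x => ⟪x, x⟫ := by
    funext x; rw [real_inner_self_eq_norm_sq]
  rw [h2]
  refine h.congr_fderiv ?_; symm
  ext v
  simp [fderivInnerCLM, real_inner_comm, two_mul]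

-- the tangential gradient field of qf A / ‖·‖²
def gv (A : ι → ι → ℝ) (y : EuclideanSpace ℝ ι) : EuclideanSpace ℝ ι :=
  (2 * (‖y‖ ^ 2)⁻¹) • Lv A y - (2 * qf A y * ((‖y‖ ^ 2)⁻¹ * (‖y‖ ^ 2)⁻¹)) • y

def LvL (A : ι → ι → ℝ) : EuclideanSpace ℝ ι →L[ℝ] EuclideanSpace ℝ ι :=
  LinearMap.toContinuousLinearMap
    { toFun := Lv A
      map_add' := by
        intro u v; ext a
        simp [Lv, mul_add, Finset.sum_add_distrib]
      map_smul' := by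
        intro c u; ext a
        simp [Lv, Finset.mul_sum, mul_comm, mul_left_comm] }

@[simp] lemma LvL_apply (A : ι → ι → ℝ) (y : EuclideanSpace ℝ ι) : LvL A y = Lv A y := rfl

lemma normsq_ne_zero {y : EuclideanSpace ℝ ι} (hy : y ≠ 0) : ‖y‖ ^ 2 ≠ 0 :=
  pow_ne_zero _ (norm_ne_zero_iff.mpr hy)

lemma hasGradientAt_G (A : ι → ι → ℝ) (hsym : ∀ a b, A a b = A b a)
    {y : EuclideanSpace ℝ ι} (hy : y ≠ 0) :
    HasGradientAt (fun z => qf A z / ‖z‖ ^ 2) (gv A y) y := by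
  rw [hasGradientAt_iff_hasFDerivAt]
  have hne := normsq_ne_zero hy
  have hinv : HasFDerivAt (fun z : EuclideanSpace ℝ ι => (‖z‖ ^ 2)⁻¹)
      ((-((‖y‖ ^ 2) ^ 2)⁻¹) • ((2:ℝ) • (innerSL ℝ y))) y :=
    (hasDerivAt_inv hne).comp_hasFDerivAt y (hasFDerivAt_normsq y)
  have h := (hasFDerivAt_qf A hsym y).mul hinv
  have hfun : (fun z : EuclideanSpace ℝ ι => qf A z / ‖z‖ ^ 2)
      = fun z => qf A z * (‖z‖ ^ 2)⁻¹ := by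
    funext z; rw [div_eq_mul_inv]
  rw [hfun]
  refine h.congr_fderiv ?_; symm
  ext v
  simp only [InnerProductSpace.toDual_apply_apply, gv, inner_sub_left, real_inner_smul_left,
    ContinuousLinearMap.add_apply, ContinuousLinearMap.smul_apply, innerSL_apply_apply,
    ContinuousLinearMap.smulRight_apply, smul_eq_mul, inner_Lv_self]
  rw [inner_Lv]
  rw [← inner_Lv A y v]
  have h2 : ⟪y, v⟫ = ⟪y, v⟫ := rfl
  field_simp
  ring

lemma inner_gv_self (A : ι → ι → ℝ) {y : EuclideanSpace ℝ ι} (hy : y ≠ 0) :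
    ⟪gv A y, y⟫ = 0 := by
  have hne := normsq_ne_zero hy
  have : ⟪y, y⟫ = ‖y‖ ^ 2 := real_inner_self_eq_norm_sq y
  simp only [gv, inner_sub_left, real_inner_smul_left, inner_Lv_self, this]
  field_simp
  ring

lemma gradS_eq (A : ι → ι → ℝ) (hsym : ∀ a b, A a b = A b a)
    {y : EuclideanSpace ℝ ι} (hy : y ≠ 0) :
    gradS (fun z => qf A z / ‖z‖ ^ 2) y = gv A y := by
  have hg := (hasGradientAt_G A hsym hy).gradient
  rw [gradS, hg, inner_gv_self A hy]
  simp


lemma hasFDerivAt_gv (A : ι → ι → ℝ) (hsym : ∀ a b, A a b = A b a)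
    {x : EuclideanSpace ℝ ι} (hx : ‖x‖ = 1) :
    ∀ v : EuclideanSpace ℝ ι, fderiv ℝ (gv A) x v
      = (2:ℝ) • Lv A v - ((4:ℝ) * ⟪x, v⟫) • Lv A x
        - ((4:ℝ) * ⟪Lv A x, v⟫ - 8 * qf A x * ⟪x, v⟫) • x - ((2:ℝ) * qf A x) • v := by
  have hx0 : x ≠ 0 := by intro h; rw [h] at hx; simp at hx
  have hne := normsq_ne_zero hx0
  have hinv : HasFDerivAt (fun z : EuclideanSpace ℝ ι => (‖z‖ ^ 2)⁻¹)
      ((-((‖x‖ ^ 2) ^ 2)⁻¹) • ((2:ℝ) • (innerSL ℝ x))) x :=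
    (hasDerivAt_inv hne).comp_hasFDerivAt x (hasFDerivAt_normsq x)
  have hc1 : HasFDerivAt (fun z : EuclideanSpace ℝ ι => 2 * (‖z‖ ^ 2)⁻¹)
      ((2:ℝ) • ((-((‖x‖ ^ 2) ^ 2)⁻¹) • ((2:ℝ) • (innerSL ℝ x)))) x := by
    simpa using hinv.const_mul (2:ℝ)
  have hL : HasFDerivAt (fun y : EuclideanSpace ℝ ι => Lv A y) (LvL A) x := by
    have : (fun y : EuclideanSpace ℝ ι => Lv A y) = ⇑(LvL A) := rfl
    rw [this]; exact (LvL A).hasFDerivAt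
  have h1 := hc1.smul hL
  have hQ := hasFDerivAt_qf A hsym x
  have hc2 := ((hQ.const_mul (2:ℝ)).mul (hinv.mul hinv))
  have h2 := hc2.smul (hasFDerivAt_id x)
  have hY := h1.sub h2
  have hgv : HasFDerivAt (gv A) _ x := hY
  intro v
  rw [hgv.fderiv]
  ext a
  simp only [ContinuousLinearMap.coe_sub', Pi.sub_apply, ContinuousLinearMap.add_apply,
    ContinuousLinearMap.smul_apply, ContinuousLinearMap.smulRight_apply, innerSL_apply_apply, Pi.mul_apply,
    ContinuousLinearMap.coe_smul', Pi.smul_apply, ContinuousLinearMap.coe_id', id_eq,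
    LvL_apply, smul_eq_mul, PiLp.sub_apply, PiLp.smul_apply, PiLp.add_apply, hx,
    one_pow, inv_one, mul_one, one_mul]
  ring

lemma Lv_single (A : ι → ι → ℝ) (i : ι) (a : ι) :
    Lv A (EuclideanSpace.single i (1:ℝ)) a = A a i := by
  simp [Lv, EuclideanSpace.single_apply]

lemma inner_single (u : EuclideanSpace ℝ ι) (i : ι) :
    ⟪u, EuclideanSpace.single i (1:ℝ)⟫ = u i := by
  simp [EuclideanSpace.inner_single_right]

lemma sum_Lv_mul (A : ι → ι → ℝ) (x : EuclideanSpace ℝ ι) :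
    ∑ i, Lv A x i * x i = qf A x := by
  have := inner_Lv_self A x
  rw [PiLp.inner_apply] at this
  simpa [mul_comm] using this

lemma main_lapS (A : ι → ι → ℝ) (hsym : ∀ a b, A a b = A b a) (htr : ∑ a, A a a = 0)
    {x : EuclideanSpace ℝ ι} (hx : ‖x‖ = 1) :
    lapS (fun z => qf A z / ‖z‖ ^ 2) x = -(2 * (Fintype.card ι : ℝ)) * qf A x := by
  have hx0 : x ≠ 0 := by intro h; rw [h] at hx; simp at hx
  have hxx : ∑ i, x i * x i = 1 := by
    have := real_inner_self_eq_norm_sq x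
    rw [PiLp.inner_apply] at this
    simp only [RCLike.inner_apply, conj_trivial] at this
    rw [this, hx]; norm_num
  -- gradS agrees with gv near x
  have heq : gradS (fun z => qf A z / ‖z‖ ^ 2) =ᶠ[nhds x] gv A := by
    filter_upwards [IsOpen.mem_nhds isOpen_compl_singleton hx0] with y hy
    exact gradS_eq A hsym hy
  have hf : fderiv ℝ (gradS (fun z => qf A z / ‖z‖ ^ 2)) x = fderiv ℝ (gv A) x :=
    heq.fderiv_eq
  have hΦ := hasFDerivAt_gv A hsym hx
  rw [lapS, divS, hf]
  have hterm : ∀ i, ⟪fderiv ℝ (gv A) x (EuclideanSpace.single i (1:ℝ)),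
      EuclideanSpace.single i (1:ℝ)⟫
      = 2 * A i i + (-8) * (Lv A x i * x i) + 8 * qf A x * (x i * x i)
        + (-2) * qf A x := by
    intro i
    rw [hΦ]
    simp only [inner_sub_left, real_inner_smul_left, inner_single, Lv_single,
      EuclideanSpace.single_apply, if_pos rfl, if_true, eq_self_iff_true, smul_eq_mul]
    ring
  have hsum : (∑ i, ⟪fderiv ℝ (gv A) x (EuclideanSpace.single i (1:ℝ)),
      EuclideanSpace.single i (1:ℝ)⟫) = -(2 * (Fintype.card ι : ℝ)) * qf A x := by
    rw [Finset.sum_congr rfl fun i _ => hterm i]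
    rw [Finset.sum_add_distrib, Finset.sum_add_distrib, Finset.sum_add_distrib,
      ← Finset.mul_sum, ← Finset.mul_sum, ← Finset.mul_sum, htr, sum_Lv_mul, hxx]
    simp [Finset.card_univ, mul_comm]
    ring
  have hx2 : ⟪fderiv ℝ (gv A) x x, x⟫ = 0 := by
    rw [hΦ]
    have h1 : ⟪x, x⟫ = (1:ℝ) := by rw [real_inner_self_eq_norm_sq, hx]; norm_num
    have h2 : ⟪Lv A x, x⟫ = qf A x := inner_Lv_self A x
    simp only [inner_sub_left, real_inner_smul_left, h1, h2, smul_eq_mul]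
    ring
  rw [hsum, hx2, sub_zero]

-- the real quadratic-form matrix of f_w
def cc : Fin 2 → ℂ := ![1, Complex.I]

def Aw {n : ℕ} (w : Matrix (Fin (n + 1)) (Fin (n + 1)) ℂ)
    (a b : Fin (n + 1) × Fin 2) : ℝ :=
  (w a.1 b.1 * cc a.2 * (starRingEnd ℂ) (cc b.2)).re

lemma Aw_symm {n : ℕ} {w : Matrix (Fin (n + 1)) (Fin (n + 1)) ℂ}
    (hw : w.IsHermitian) (a b : Fin (n + 1) × Fin 2) : Aw w a b = Aw w b a := by
  have hwe : w b.1 a.1 = (starRingEnd ℂ) (w a.1 b.1) := by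
    have := congrFun (congrFun hw.symm b.1) a.1
    rw [Matrix.conjTranspose_apply] at this
    exact this.symm ▸ rfl
  have : Aw w b a = ((starRingEnd ℂ) (w b.1 a.1 * cc b.2 * (starRingEnd ℂ) (cc a.2))).re :=
    (Complex.conj_re _).symm
  rw [Aw, this, map_mul, map_mul, Complex.conj_conj, hwe, Complex.conj_conj]
  congr 1
  ring

lemma Aw_trace {n : ℕ} {w : Matrix (Fin (n + 1)) (Fin (n + 1)) ℂ}
    (htr : w.trace = 0) : ∑ a, Aw w a a = 0 := by
  rw [Fintype.sum_prod_type]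
  have h : ∀ i : Fin (n + 1), ∑ s : Fin 2, Aw w (i, s) (i, s) = 2 * (w i i).re := by
    intro i
    rw [Fin.sum_univ_two]
    simp [Aw, cc, Complex.mul_re, Complex.mul_im]
    ring
  rw [Finset.sum_congr rfl fun i _ => h i, ← Finset.mul_sum]
  have : ∑ i, (w i i).re = (w.trace).re := by
    rw [Matrix.trace]
    simp [Matrix.diag, Complex.re_sum]
  rw [this, htr]
  simp

lemma fw_eq_qf {n : ℕ} (w : Matrix (Fin (n + 1)) (Fin (n + 1)) ℂ)
    (y : EuclideanSpace ℝ (Fin (n + 1) × Fin 2)) :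
    fw w y = qf (Aw w) y / ‖y‖ ^ 2 := by
  rw [fw, qf]
  congr 1
  have key : ∀ i j, (w i j * zc y i * (starRingEnd ℂ) (zc y j)).re
      = ∑ s, ∑ t, Aw w (i, s) (j, t) * y (i, s) * y (j, t) := by
    intro i j
    rw [Fin.sum_univ_two, Fin.sum_univ_two, Fin.sum_univ_two]
    simp only [Aw, cc, Matrix.cons_val_zero, Matrix.cons_val_one, Matrix.head_cons, zc]
    simp [Complex.mul_re, Complex.mul_im, Complex.add_re, Complex.add_im]
    ring
  calc (∑ i, ∑ j, w i j * zc y i * (starRingEnd ℂ) (zc y j)).re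
      = ∑ i, ∑ j, (w i j * zc y i * (starRingEnd ℂ) (zc y j)).re := by
        rw [Complex.re_sum]
        exact Finset.sum_congr rfl fun i _ => Complex.re_sum _ _
    _ = ∑ i, ∑ j, ∑ s, ∑ t, Aw w (i, s) (j, t) * y (i, s) * y (j, t) :=
        Finset.sum_congr rfl fun i _ => Finset.sum_congr rfl fun j _ => key i j
    _ = ∑ i, ∑ s, ∑ j, ∑ t, Aw w (i, s) (j, t) * y (i, s) * y (j, t) :=
        Finset.sum_congr rfl fun i _ => Finset.sum_comm
    _ = ∑ a : Fin (n+1) × Fin 2, ∑ b : Fin (n+1) × Fin 2, Aw w a b * y a * y b := by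
        rw [Fintype.sum_prod_type]
        refine Finset.sum_congr rfl fun i _ => Finset.sum_congr rfl fun s _ => ?_
        rw [Fintype.sum_prod_type]


/-- On `ℂPⁿ` with the Fubini–Study metric normalized so that
`Ric = ((n+1)/2) g`, for every traceless Hermitian `w` the function
`f_w([z]) = Σ_{i,j} w_{ij} z_i \bar z_j / |z|²` satisfies `Δ f_w = -(n+1) f_w`:
it is an eigenfunction for the first non-zero eigenvalue `n+1`. -/
theorem stmt14 (n : ℕ) (w : Matrix (Fin (n + 1)) (Fin (n + 1)) ℂ)
    (hw : w.IsHermitian) (htr : w.trace = 0) :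
    ∀ x ∈ Sph (Fin (n + 1) × Fin 2), lapFS (fw w) x = -((n : ℝ) + 1) * fw w x := by
  intro x hx
  have hx1 : ‖x‖ = 1 := hx
  have hfw : fw w = fun z => qf (Aw w) z / ‖z‖ ^ 2 := funext (fw_eq_qf w)
  rw [lapFS, hfw, main_lapS (Aw w) (Aw_symm hw) (Aw_trace htr) hx1]
  have hcard : (Fintype.card (Fin (n + 1) × Fin 2) : ℝ) = 2 * (n + 1) := by
    simp [Fintype.card_prod]
    ring
  rw [hcard]
  show 1 / 4 * (-(2 * (2 * ((n:ℝ) + 1))) * qf (Aw w) x) = -((n:ℝ) + 1) * (qf (Aw w) x / ‖x‖ ^ 2)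
  rw [hx1]
  ring


end
end

section
/- On ℂP^n with the Fubini–Study metric, at the point x = [1, 0, …, 0], the Hessian of the first eigenfunction f_w corresponding to w = diag(1, −1/n, …, −1/n) is a scalar multiple of the metric: ∇²f_w = −((n+1)/(2n)) g at x. -/
open scoped RealInnerProductSpace

noncomputable section

set_option synthInstance.maxHeartbeats 1000000 in
set_option maxHeartbeats 1000000 in
/-- On `ℂPⁿ` with the Fubini–Study metric, at `x = [1, 0, …, 0]`, the
Hessian of the first eigenfunction `f_w` with `w = diag(1, -1/n, …, -1/n)` is
`∇²f_w = -((n+1)/(2n)) g`.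

We formalize this in the standard affine chart `ℂⁿ ≅ ℝ^{2n}` centered at `x` (where
`z = 0`), in which `f_w(z) = (1 - |z|²/n)/(1 + |z|²)`.  The chart is normal at `z = 0`
(the first derivatives of the Fubini–Study metric vanish there), so the Riemannian Hessian
is the coordinate second derivative; the metric at `z = 0` is `g₀(v, w) = 4⟨v, w⟩` (as
`⟨∂/∂z^i, ∂/∂\bar z^j⟩ = 2δ_{ij}` there).  Thus the claim reads: the second coordinate
derivative of `f_w` at `0` equals `-((n+1)/(2n)) · 4⟨v, w⟩`. -/
theorem stmt15 (n : ℕ) (hn : 1 ≤ n)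
    (f : EuclideanSpace ℝ (Fin n × Fin 2) → ℝ)
    (hf : f = fun p => (1 - ‖p‖ ^ 2 / (n : ℝ)) / (1 + ‖p‖ ^ 2))
    (v w : EuclideanSpace ℝ (Fin n × Fin 2)) :
    fderiv ℝ (fun x => fderiv ℝ f x v) 0 w
      = -(((n : ℝ) + 1) / (2 * (n : ℝ))) * (4 * ⟪v, w⟫) := by
  have hn0 : (n : ℝ) ≠ 0 := by positivity
  have hpos : ∀ p : EuclideanSpace ℝ (Fin n × Fin 2), (0:ℝ) < 1 + ‖p‖ ^ 2 :=
    fun p => by positivity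
  have hf' : f = fun p : EuclideanSpace ℝ (Fin n × Fin 2) =>
      (((n:ℝ)+1)/n) * (1 + ‖p‖ ^ 2)⁻¹ - 1/n := by
    rw [hf]; funext p
    have h := (hpos p).ne'
    field_simp
    ring
  have hnsq : ∀ x : EuclideanSpace ℝ (Fin n × Fin 2),
      HasFDerivAt (fun p : EuclideanSpace ℝ (Fin n × Fin 2) => 1 + ‖p‖ ^ 2)
        (2 • (innerSL ℝ x)) x :=
    fun x => ((hasStrictFDerivAt_norm_sq x).hasFDerivAt).const_add 1
  have hD : ∀ x : EuclideanSpace ℝ (Fin n × Fin 2), HasFDerivAt f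
      (((((n:ℝ)+1)/n) * (-(((1 + ‖x‖ ^ 2) ^ 2)⁻¹))) • (2 • (innerSL ℝ x))) x := by
    intro x
    rw [hf']
    have hinv : HasDerivAt (fun s : ℝ => s⁻¹) (-(((1 + ‖x‖^2) ^ 2)⁻¹)) (1 + ‖x‖^2) := by
      simpa using hasDerivAt_inv (hpos x).ne'
    have h2 := hinv.comp_hasFDerivAt x (hnsq x)
    exact ((h2.const_mul (((n:ℝ)+1)/n)).sub_const (1/(n:ℝ))).congr_fderiv (by
      ext u; simp [Function.comp]; ring)
  have hgv : (fun x : EuclideanSpace ℝ (Fin n × Fin 2) => fderiv ℝ f x v)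
      = fun x : EuclideanSpace ℝ (Fin n × Fin 2) =>
        (-(((1 + ‖x‖ ^ 2) ^ 2)⁻¹)) * ((((n:ℝ)+1)/n) * 2 * ⟪x, v⟫) := by
    funext x
    rw [(hD x).fderiv]
    simp
    ring
  rw [hgv]
  -- factor A(x) = -((1+‖x‖²)²)⁻¹ and B(x) = ((n+1)/n * 2) * ⟪x, v⟫
  have hφ : HasDerivAt (fun s : ℝ => -((s^2)⁻¹)) 2 (1 + ‖(0:EuclideanSpace ℝ (Fin n × Fin 2))‖^2) := by
    have h := ((hasDerivAt_pow 2 (1:ℝ)).inv (by norm_num)).neg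
    have h1 : (1:ℝ) + ‖(0:EuclideanSpace ℝ (Fin n × Fin 2))‖^2 = 1 := by simp
    rw [h1]
    exact h.congr_deriv (by norm_num)
  have hA : HasFDerivAt (fun x : EuclideanSpace ℝ (Fin n × Fin 2) => -(((1 + ‖x‖ ^ 2) ^ 2)⁻¹))
      ((2:ℝ) • (2 • (innerSL ℝ (0:EuclideanSpace ℝ (Fin n × Fin 2))))) 0 :=
    by have := hφ.comp_hasFDerivAt 0 (hnsq 0); exact this
  have hB : HasFDerivAt (fun x : EuclideanSpace ℝ (Fin n × Fin 2) => (((n:ℝ)+1)/n * 2) * ⟪x, v⟫)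
      ((((n:ℝ)+1)/n * 2) • (innerSL ℝ v)) 0 := by
    have hb : HasFDerivAt (fun x : EuclideanSpace ℝ (Fin n × Fin 2) => ⟪x, v⟫)
        (innerSL ℝ v) (0:EuclideanSpace ℝ (Fin n × Fin 2)) := by
      have : (fun x : EuclideanSpace ℝ (Fin n × Fin 2) => ⟪x, v⟫)
          = fun x => (innerSL ℝ v) x := by
        funext x; simp only [innerSL_apply_apply]; exact real_inner_comm v x
      rw [this]
      exact (innerSL ℝ v).hasFDerivAt
    exact hb.const_mul _
  rw [(by have := hA.mul hB; exact this : HasFDerivAt (fun x : EuclideanSpace ℝ (Fin n × Fin 2) =>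
      -(((1 + ‖x‖ ^ 2) ^ 2)⁻¹) * ((((n:ℝ)+1)/n * 2) * ⟪x, v⟫)) _ 0).fderiv]
  simp [real_inner_comm v w]
  field_simp
  ring
end
end
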